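/- arXiv:2203.04760 — 8 statements merged into one kernel-verified Lean document; each statement's English description precedes it below -/
import Mathlib

section
/- If 0 ≤ d ≤ k ≤ n - d and f is a function on the slice {x ∈ {0,1}^n : Σ x_i = k} expressible as a polynomial of degree at most d, then f can be written as a linear combination of monomials x_S = Π_{i∈S} x_i where every S has size exactly d. -/
/-- Hamming weight of a Boolean vector. -/
def wt {n : ℕ} (x : Fin n → Bool) : ℕ := (Finset.univ.filter (fun i => x i = true)).card

/-!
On the slice of weight `k`, every monomial `x_S` with `|S| ≤ d ≤ k` is a multiple of the sum of
the monomials `x_T` over the `d`-sets `T ⊇ S`: at a point with support `A`, that sum counts the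
`d`-sets between `S` and `A`, which is `C(k - |S|, d - |S|)` when `S ⊆ A` and `0` otherwise. This
binomial coefficient is nonzero as `d ≤ k`, so each `x_S` can be replaced by degree-`d` monomials.
-/

open Finset

theorem card_powersetCard_filter_superset {α : Type*} [DecidableEq α] {S A : Finset α} {d : ℕ}
    (hSA : S ⊆ A) (hSd : #S ≤ d) :
    #{T ∈ A.powersetCard d | S ⊆ T} = (#A - #S).choose (d - #S) := by
  rw [← card_sdiff_of_subset hSA, ← card_powersetCard]
  refine card_nbij' (· \ S) (· ∪ S) ?_ ?_ ?_ ?_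
  · intro T hT
    simp only [coe_filter, mem_powersetCard, Set.mem_ofPred_eq, mem_coe] at hT ⊢
    obtain ⟨⟨hTA, hTd⟩, hST⟩ := hT
    exact ⟨sdiff_subset_sdiff hTA le_rfl, by rw [card_sdiff_of_subset hST, hTd]⟩
  · intro U hU
    simp only [coe_filter, mem_powersetCard, Set.mem_ofPred_eq, mem_coe] at hU ⊢
    obtain ⟨hUA, hUd⟩ := hU
    have hUS : Disjoint U S := disjoint_of_subset_left hUA sdiff_disjoint
    refine ⟨⟨union_subset (hUA.trans sdiff_subset) hSA, ?_⟩, subset_union_right⟩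
    rw [card_union_of_disjoint hUS, hUd]
    omega
  · intro T hT
    exact sdiff_union_of_subset (mem_filter.1 hT).2
  · intro U hU
    exact union_sdiff_cancel_right
      (disjoint_of_subset_left (mem_powersetCard.1 hU).1 sdiff_disjoint)

theorem sum_prod_indicator_superset {ι R : Type*} [Fintype ι] [DecidableEq ι] [CommSemiring R]
    (x : ι → Bool) {S : Finset ι} {d : ℕ} (hSd : #S ≤ d) :
    ∑ T ∈ {T : Finset ι | #T = d ∧ S ⊆ T}, ∏ i ∈ T, (if x i = true then (1 : R) else 0)
      = (#{i | x i = true} - #S).choose (d - #S) * ∏ i ∈ S, (if x i = true then (1 : R) else 0) := by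
  set A : Finset ι := {i | x i = true}
  have hmem : ∀ T : Finset ι, (∀ i ∈ T, x i = true) ↔ T ⊆ A := fun T => by
    simp [A, subset_iff]
  have hcount : ({T : Finset ι | #T = d ∧ S ⊆ T} : Finset _).filter (· ⊆ A)
      = {T ∈ A.powersetCard d | S ⊆ T} := by
    ext T
    simp only [mem_filter, mem_univ, true_and, mem_powersetCard]
    tauto
  simp only [prod_boole, hmem]
  rw [sum_boole, hcount]
  split_ifs with hSA
  · rw [card_powersetCard_filter_superset hSA hSd, mul_one]
  · have hempty : {T ∈ A.powersetCard d | S ⊆ T} = ∅ :=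
      filter_eq_empty_iff.2 fun T hT hST => hSA (hST.trans (mem_powersetCard.1 hT).1)
    rw [hempty, card_empty, Nat.cast_zero, mul_zero]

theorem stmt0_general (n k d : ℕ) (hdk : d ≤ k)
    (f : (Fin n → Bool) → ℝ) (c : Finset (Fin n) → ℝ)
    (hf : ∀ x, wt x = k →
      f x = ∑ S ∈ Finset.univ.filter (fun S : Finset (Fin n) => S.card ≤ d),
        c S * ∏ i ∈ S, (if x i = true then (1:ℝ) else 0)) :
    ∃ c' : Finset (Fin n) → ℝ, ∀ x, wt x = k →
      f x = ∑ S ∈ Finset.univ.filter (fun S : Finset (Fin n) => S.card = d),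
        c' S * ∏ i ∈ S, (if x i = true then (1:ℝ) else 0) := by
  refine ⟨fun T => ∑ S ∈ {S | #S ≤ d ∧ S ⊆ T}, c S / (k - #S).choose (d - #S), fun x hx => ?_⟩
  calc f x = ∑ S ∈ {S | #S ≤ d}, c S * ∏ i ∈ S, (if x i = true then (1:ℝ) else 0) := hf x hx
    _ = ∑ S ∈ {S | #S ≤ d}, ∑ T ∈ {T | #T = d ∧ S ⊆ T},
          c S / (k - #S).choose (d - #S) * ∏ i ∈ T, (if x i = true then (1:ℝ) else 0) := by
        refine sum_congr rfl fun S hS => ?_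
        have hSd : #S ≤ d := (mem_filter.1 hS).2
        have hchoose : ((k - #S).choose (d - #S) : ℝ) ≠ 0 :=
          Nat.cast_ne_zero.2 (Nat.choose_pos (by omega)).ne'
        rw [← mul_sum, sum_prod_indicator_superset x hSd, ← wt, hx]
        field_simp
    _ = ∑ T ∈ {T | #T = d}, ∑ S ∈ {S | #S ≤ d ∧ S ⊆ T},
          c S / (k - #S).choose (d - #S) * ∏ i ∈ T, (if x i = true then (1:ℝ) else 0) :=
        sum_comm' fun S T => by
          simp only [mem_filter, mem_univ, true_and]
          tauto
    _ = _ := by simp_rw [← sum_mul]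

theorem stmt0 (n k d : ℕ) (hdk : d ≤ k) (hkn : k ≤ n - d)
    (f : (Fin n → Bool) → ℝ) (c : Finset (Fin n) → ℝ)
    (hf : ∀ x, wt x = k →
      f x = ∑ S ∈ Finset.univ.filter (fun S : Finset (Fin n) => S.card ≤ d),
        c S * ∏ i ∈ S, (if x i = true then (1:ℝ) else 0)) :
    ∃ c' : Finset (Fin n) → ℝ, ∀ x, wt x = k →
      f x = ∑ S ∈ Finset.univ.filter (fun S : Finset (Fin n) => S.card = d),
        c' S * ∏ i ∈ S, (if x i = true then (1:ℝ) else 0) :=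
  stmt0_general n k d hdk f c hf
end

section
/- Let f be a function on the slice binom([n],k), and suppose I, J are disjoint subsets of [n] such that for every i ∈ I and j ∈ J there exists x in the slice with f(x) ≠ f(x^{(i j)}), where x^{(i j)} swaps coordinates i and j. If f is an m-junta then m ≥ min(|I|, |J|). -/
open Finset

lemma wt_comp_perm {n : ℕ} (x : Fin n → Bool) (e : Equiv.Perm (Fin n)) :
    wt (x ∘ e) = wt x :=
  Finset.card_equiv e (by simp)

lemma Finset.subset_or_subset_of_forall_mem_or_mem {α : Type*} {I J K : Finset α}
    (h : ∀ i ∈ I, ∀ j ∈ J, i ∈ K ∨ j ∈ K) : I ⊆ K ∨ J ⊆ K := by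
  by_contra! hnot
  obtain ⟨i, hi, hiK⟩ := not_subset.mp hnot.1
  obtain ⟨j, hj, hjK⟩ := not_subset.mp hnot.2
  exact (h i hi j hj).elim hiK hjK

lemma Finset.min_card_le_card_of_forall_mem_or_mem {α : Type*} {I J K : Finset α}
    (h : ∀ i ∈ I, ∀ j ∈ J, i ∈ K ∨ j ∈ K) : min #I #J ≤ #K := by
  rcases subset_or_subset_of_forall_mem_or_mem h with hI | hJ
  · exact (min_le_left _ _).trans (card_le_card hI)
  · exact (min_le_right _ _).trans (card_le_card hJ)

lemma comp_swap_eq_of_junta {n k : ℕ} {β : Type*} {f : (Fin n → Bool) → β} {K : Finset (Fin n)}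
    (hjunta : ∀ x y : Fin n → Bool, wt x = k → wt y = k → (∀ i ∈ K, x i = y i) → f x = f y)
    {x : Fin n → Bool} (hx : wt x = k) {i j : Fin n} (hi : i ∉ K) (hj : j ∉ K) :
    f (x ∘ Equiv.swap i j) = f x := by
  refine hjunta _ _ (by rwa [wt_comp_perm]) hx fun l hl => ?_
  rw [Function.comp_apply, Equiv.swap_apply_of_ne_of_ne (ne_of_mem_of_not_mem hl hi)
    (ne_of_mem_of_not_mem hl hj)]

theorem stmt2_general (n k m : ℕ) (f : (Fin n → Bool) → ℝ) (I J : Finset (Fin n))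
    (hswap : ∀ i ∈ I, ∀ j ∈ J, ∃ x : Fin n → Bool, wt x = k ∧
      f x ≠ f (x ∘ Equiv.swap i j))
    (K : Finset (Fin n)) (hK : K.card ≤ m)
    (hjunta : ∀ x y : Fin n → Bool, wt x = k → wt y = k →
      (∀ i ∈ K, x i = y i) → f x = f y) :
    min I.card J.card ≤ m := by
  have hmeet : ∀ i ∈ I, ∀ j ∈ J, i ∈ K ∨ j ∈ K := by
    intro i hi j hj
    by_contra! hout
    obtain ⟨x, hx, hne⟩ := hswap i hi j hj
    exact hne (comp_swap_eq_of_junta hjunta hx hout.1 hout.2).symm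
  exact (min_card_le_card_of_forall_mem_or_mem hmeet).trans hK

theorem stmt2 (n k m : ℕ) (f : (Fin n → Bool) → ℝ) (I J : Finset (Fin n))
    (hIJ : Disjoint I J)
    (hswap : ∀ i ∈ I, ∀ j ∈ J, ∃ x : Fin n → Bool, wt x = k ∧
      f x ≠ f (x ∘ Equiv.swap i j))
    (K : Finset (Fin n)) (hK : K.card ≤ m)
    (hjunta : ∀ x y : Fin n → Bool, wt x = k → wt y = k →
      (∀ i ∈ K, x i = y i) → f x = f y) :
    min I.card J.card ≤ m :=
  stmt2_general n k m f I J hswap K hK hjunta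
end

section
/- For all parameters c, d ∈ ℕ and every k ≥ 1, there exists n ≥ 1 such that: whenever A and B are disjoint sets of size n and every d-element subset of A ∪ B is colored with one of c colors, there exist subsets A' ⊆ A and B' ⊆ B of size k and colors c_0, ..., c_d such that every d-element subset T of A' ∪ B' has color c_{|T ∩ A|}. -/
/-!
Ramsey's theorem for `d`-sets is proved by induction on `d`: peeling off one point `x` at a
time and passing to a large set on which `D ↦ χ (insert x D)` is constant, one builds a set on
which the colour of a `(d+1)`-set is the colour `g x` attached to its earliest chosen point;
pigeonhole on `g` finishes.

For the bipartite statement, enumerate `A` and `B` by the same index set `Fin n` and colour a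
`d`-set `Z` of indices by the vector, over `i ≤ d`, of the colours of the set sending the `i`
smallest elements of `Z` into `A` and the others into `B`. On a homogeneous set of `2k` indices,
the lower half indexes `A'` and the upper half `B'`: every `d`-subset `T` of `A' ∪ B'` then comes
from a `d`-set `Z` whose `#(T ∩ A)` smallest elements are sent into `A`.
-/

open Finset

universe u

def IsRamseyBound (C : Type*) (d m N : ℕ) : Prop :=
  ∀ ⦃ι : Type u⦄ [DecidableEq ι] (S : Finset ι) (χ : Finset ι → C), N ≤ #S →
    ∃ H ⊆ S, #H = m ∧ ∃ c, ∀ T ⊆ H, #T = d → χ T = c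

theorem exists_fiberwise_homogeneous {C : Type*} {d : ℕ}
    (hR : ∀ m, ∃ N, IsRamseyBound.{u} C d m N) (L : ℕ) :
    ∃ N, ∀ ⦃ι : Type u⦄ [DecidableEq ι] (S : Finset ι) (χ : Finset ι → C), N ≤ #S →
      ∃ X ⊆ S, #X = L ∧ ∃ g : ι → C,
        ∀ T ⊆ X, #T = d + 1 → ∀ c, (∀ t ∈ T, g t = c) → χ T = c := by
  induction L with
  | zero =>
    refine ⟨0, fun ι _ S χ _ => ⟨∅, empty_subset _, rfl, fun _ => χ ∅, fun T hT hTd => ?_⟩⟩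
    simp [subset_empty.1 hT] at hTd
  | succ L ih =>
    obtain ⟨N, hN⟩ := ih
    obtain ⟨M, hM⟩ := hR N
    refine ⟨M + 1, fun ι _ S χ hS => ?_⟩
    obtain ⟨x, hx⟩ : S.Nonempty := card_pos.1 (by omega)
    obtain ⟨H, hHS, hHcard, cx, hcx⟩ :=
      hM (S.erase x) (fun D => χ (insert x D)) (by rw [card_erase_of_mem hx]; omega)
    obtain ⟨X, hXH, hXcard, g, hg⟩ := hN H χ hHcard.ge
    have hxX : x ∉ X := fun h => (mem_erase.1 (hHS (hXH h))).1 rfl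
    refine ⟨insert x X, insert_subset hx ((hXH.trans hHS).trans (erase_subset _ _)),
      by rw [card_insert_of_notMem hxX, hXcard], Function.update g x cx,
      fun T hT hTcard c hc => ?_⟩
    by_cases hxT : x ∈ T
    · rw [← insert_erase hxT, ← hc x hxT, Function.update_self]
      exact hcx _ ((subset_insert_iff.1 hT).trans hXH)
        (by rw [card_erase_of_mem hxT, hTcard]; rfl)
    · refine hg T ((subset_insert_iff_of_notMem hxT).1 hT) hTcard c fun t ht => ?_
      rw [← hc t ht, Function.update_of_ne (ne_of_mem_of_not_mem ht hxT)]

theorem exists_isRamseyBound (C : Type*) [Finite C] (d m : ℕ) :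
    ∃ N, IsRamseyBound.{u} C d m N := by
  classical
  induction d generalizing m with
  | zero =>
    refine ⟨m, fun ι _ S χ hS => ?_⟩
    obtain ⟨H, hHS, hH⟩ := exists_subset_card_eq hS
    exact ⟨H, hHS, hH, χ ∅, fun T _ hT => by rw [card_eq_zero.1 hT]⟩
  | succ d ih =>
    have := Fintype.ofFinite C
    obtain ⟨N, hN⟩ := exists_fiberwise_homogeneous ih (Fintype.card C * m)
    refine ⟨N, fun ι _ S χ hS => ?_⟩
    obtain ⟨X, hXS, hXcard, g, hg⟩ := hN S χ hS
    obtain ⟨c, -, hc⟩ := exists_le_card_fiber_of_mul_le_card_of_maps_to (f := g)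
      (fun _ _ => mem_univ _) ⟨χ ∅, mem_univ _⟩ (by rw [card_univ, hXcard])
    obtain ⟨H, hH, hHcard⟩ := exists_subset_card_eq hc
    have hHX : H ⊆ X := hH.trans (filter_subset _ _)
    exact ⟨H, hHX.trans hXS, hHcard, c, fun T hT hTcard =>
      hg T (hT.trans hHX) hTcard c fun t ht => (mem_filter.1 (hH (hT ht))).2⟩

def lowerPart {ι : Type*} [LinearOrder ι] (Z : Finset ι) (i : ℕ) : Finset ι :=
  {z ∈ Z | #{w ∈ Z | w < z} < i}

lemma lowerPart_union {ι : Type*} [LinearOrder ι] {X Y : Finset ι}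
    (h : ∀ x ∈ X, ∀ y ∈ Y, x < y) : lowerPart (X ∪ Y) #X = X := by
  ext z
  simp only [lowerPart, mem_filter, mem_union]
  constructor
  · rintro ⟨hz | hz, hlt⟩
    · exact hz
    · refine absurd hlt (not_lt.2 (card_le_card fun x hx => ?_))
      exact mem_filter.2 ⟨mem_union_left _ hx, h x hx z hz⟩
  · intro hz
    refine ⟨Or.inl hz,
      card_lt_card ⟨fun w hw => ?_, fun hX => lt_irrefl z (mem_filter.1 (hX hz)).2⟩⟩
    obtain ⟨hw, hwz⟩ := mem_filter.1 hw
    obtain hw | hw := mem_union.1 hw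
    · exact hw
    · exact absurd (h z hz w hw) (not_lt.2 hwz.le)

lemma exists_subset_card_eq_add_lt {ι : Type*} [LinearOrder ι] {H : Finset ι} {a b : ℕ}
    (h : #H = a + b) :
    ∃ H₁ ⊆ H, ∃ H₂ ⊆ H, #H₁ = a ∧ #H₂ = b ∧ ∀ x ∈ H₁, ∀ y ∈ H₂, x < y := by
  let e := H.orderEmbOfFin h
  refine ⟨univ.map ((Fin.castAddEmb b).trans e.toEmbedding), ?_,
    univ.map ((Fin.natAddEmb a).trans e.toEmbedding), ?_, by simp, by simp, ?_⟩
  · simp [subset_iff, e]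
  · simp [subset_iff, e]
  · simp only [mem_map, mem_univ, true_and]
    rintro _ ⟨i, rfl⟩ _ ⟨j, rfl⟩
    exact e.lt_iff_lt.2 (Fin.lt_def.2 (by simp; omega))

lemma exists_fin_embedding_map_univ {α : Type*} {A : Finset α} {n : ℕ} (h : #A = n) :
    ∃ f : Fin n ↪ α, univ.map f = A := by
  subst h
  refine ⟨A.equivFin.symm.toEmbedding.trans (Function.Embedding.subtype _), ?_⟩
  ext a
  simp only [mem_map, mem_univ, true_and]
  exact ⟨by rintro ⟨i, rfl⟩; exact (A.equivFin.symm i).2, fun ha => ⟨A.equivFin ⟨a, ha⟩, by simp⟩⟩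

lemma exists_eq_map_lowerPart_union {ι α : Type*} [LinearOrder ι] [DecidableEq α]
    {f g : ι ↪ α} {A : Finset α} {H₁ H₂ : Finset ι} (hf : H₁.map f ⊆ A)
    (hg : Disjoint (H₂.map g) A) (hlt : ∀ x ∈ H₁, ∀ y ∈ H₂, x < y) {T : Finset α}
    (hT : T ⊆ H₁.map f ∪ H₂.map g) :
    ∃ Z ⊆ H₁ ∪ H₂, #Z = #T ∧
      T = (lowerPart Z #(T ∩ A)).map f ∪ (Z \ lowerPart Z #(T ∩ A)).map g := by
  have hTA : T ∩ A ⊆ H₁.map f := fun t ht =>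
    (mem_union.1 (hT (mem_inter.1 ht).1)).resolve_right
      fun htg => disjoint_left.1 hg htg (mem_inter.1 ht).2
  have hTB : T \ A ⊆ H₂.map g := fun t ht =>
    (mem_union.1 (hT (mem_sdiff.1 ht).1)).resolve_left fun htf => (mem_sdiff.1 ht).2 (hf htf)
  obtain ⟨X, hX, hTX⟩ := subset_map_iff.1 hTA
  obtain ⟨Y, hY, hTY⟩ := subset_map_iff.1 hTB
  have hXY : ∀ x ∈ X, ∀ y ∈ Y, x < y := fun x hx y hy => hlt x (hX hx) y (hY hy)
  have hdisj : Disjoint X Y := disjoint_left.2 fun z hzX hzY => lt_irrefl z (hXY z hzX z hzY)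
  refine ⟨X ∪ Y, union_subset_union hX hY, ?_, ?_⟩
  · rw [card_union_of_disjoint hdisj, ← card_inter_add_card_sdiff T A, hTX, hTY, card_map,
      card_map]
  · rw [hTX, card_map, lowerPart_union hXY, union_sdiff_cancel_left hdisj, ← hTX, ← hTY,
      union_comm, sdiff_union_inter]

theorem stmt3 (c d : ℕ) : ∀ k : ℕ, 1 ≤ k → ∃ n : ℕ, 1 ≤ n ∧
    ∀ (α : Type) [DecidableEq α] (A B : Finset α), Disjoint A B →
      A.card = n → B.card = n →
      ∀ χ : Finset α → Fin c,
        ∃ A' B' : Finset α, A' ⊆ A ∧ B' ⊆ B ∧ A'.card = k ∧ B'.card = k ∧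
          ∃ col : ℕ → Fin c, ∀ T : Finset α, T ⊆ A' ∪ B' → T.card = d →
            χ T = col (T ∩ A).card := by
  intro k _
  obtain ⟨N, hN⟩ := exists_isRamseyBound.{0} (Fin (d + 1) → Fin c) d (k + k)
  refine ⟨N + 1, le_add_self, fun α _ A B hAB hA hB χ => ?_⟩
  obtain ⟨f, rfl⟩ := exists_fin_embedding_map_univ hA
  obtain ⟨g, rfl⟩ := exists_fin_embedding_map_univ hB
  obtain ⟨H, -, hH, col, hcol⟩ := hN univ
    (fun Z i => χ ((lowerPart Z i).map f ∪ (Z \ lowerPart Z i).map g)) (by simp)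
  obtain ⟨H₁, hH₁, H₂, hH₂, hH₁k, hH₂k, hlt⟩ := exists_subset_card_eq_add_lt hH
  refine ⟨H₁.map f, H₂.map g, map_subset_map.2 (subset_univ _),
    map_subset_map.2 (subset_univ _), by simp [hH₁k], by simp [hH₂k],
    fun j => col (Fin.ofNat (d + 1) j), fun T hT hTd => ?_⟩
  obtain ⟨Z, hZ, hZT, hTZ⟩ := exists_eq_map_lowerPart_union (map_subset_map.2 (subset_univ _))
    (disjoint_of_subset_left (map_subset_map.2 (subset_univ _)) hAB.symm) hlt hT
  have hi : #(T ∩ univ.map f) < d + 1 :=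
    Nat.lt_succ_of_le ((card_le_card inter_subset_left).trans hTd.le)
  have hZcol := congrFun (hcol Z (hZ.trans (union_subset hH₁ hH₂)) (hZT.trans hTd))
    (Fin.ofNat (d + 1) #(T ∩ univ.map f))
  simp only [Fin.val_ofNat, Nat.mod_eq_of_lt hi] at hZcol
  exact (congrArg χ hTZ).trans hZcol
end

section
/- Let A and B be disjoint countably infinite sets and let every d-element subset of A ∪ B be colored with one of c colors (c, d finite). Then for every k ≥ 1 there exist A' ⊆ A of size k, an infinite B' ⊆ B, and colors c_0, ..., c_d such that every d-element subset T of A' ∪ B' has color c_{|T ∩ A|}. -/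
/-!
Enumerate injectively `A ⊇ {a₀, a₁, …}` and `B ⊇ {b₀, b₁, …}` and colour a `d`-set `Y ⊆ ℕ` by the
tuple, over `s ≤ d`, of the colours of `{a_y : y among the s smallest of Y} ∪ {b_y : y among the
others}`. Infinite Ramsey gives an infinite homogeneous `H ⊆ ℕ`. Take `A'` from the `k` smallest
indices of `H` and `B'` from the indices beyond them: a `d`-set `T ⊆ A' ∪ B'` then has all its
`A`-indices below its `B`-indices, so its colour is the component `s = |T ∩ A|` of that tuple.
-/

open Set Finset

section Ramsey

variable {α κ : Type*} [Finite κ]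

theorem exists_homogeneous_of_antitone [DecidableEq α] {n : ℕ} {f : Finset α → κ} {C : ℕ → Set α}
    (hC : Antitone C) {p : ℕ → α} {ρ : ℕ → κ} (hp : ∀ m, p m ∈ C m)
    (hp_succ : ∀ m, p m ∉ C (m + 1))
    (hρ : ∀ m, ∀ U : Finset α, ↑U ⊆ C (m + 1) → #U = n → f (insert (p m) U) = ρ m) :
    ∃ H ⊆ C 0, H.Infinite ∧ ∃ r, ∀ U : Finset α, ↑U ⊆ H → #U = n + 1 → f U = r := by
  classical
  have hp_inj : Function.Injective p := .of_lt_imp_ne fun i j hij hpij =>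
    hp_succ i (hpij ▸ hC (Nat.succ_le_of_lt hij) (hp j))
  obtain ⟨v, hv⟩ := Finite.exists_infinite_fiber ρ
  refine ⟨p '' (ρ ⁻¹' {v}), ?_, (infinite_coe_iff.1 hv).image hp_inj.injOn, v, ?_⟩
  · rintro _ ⟨m, -, rfl⟩
    exact hC (Nat.zero_le m) (hp m)
  intro U hU hUcard
  have hex : ∃ m, ρ m = v ∧ p m ∈ U := by
    obtain ⟨x, hx⟩ : U.Nonempty := Finset.card_pos.1 (by omega)
    obtain ⟨m, hm, rfl⟩ := hU hx
    exact ⟨m, hm, hx⟩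
  obtain ⟨i, ⟨hρi, hiU⟩, hi_min⟩ : ∃ i, (ρ i = v ∧ p i ∈ U) ∧ ∀ j, ρ j = v → p j ∈ U → i ≤ j :=
    ⟨Nat.find hex, Nat.find_spec hex, fun j hj hjU => Nat.find_min' hex ⟨hj, hjU⟩⟩
  have hrest : ↑(U.erase (p i)) ⊆ C (i + 1) := by
    intro x hx
    obtain ⟨hne, hxU⟩ := Finset.mem_erase.1 hx
    obtain ⟨j, hj, rfl⟩ := hU hxU
    have hij : i ≤ j := hi_min j hj hxU
    have hji : j ≠ i := fun h => hne (h ▸ rfl)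
    exact hC (by omega) (hp j)
  calc f U = f (insert (p i) (U.erase (p i))) := by rw [Finset.insert_erase hiU]
    _ = v := (hρ i _ hrest (by rw [Finset.card_erase_of_mem hiU, hUcard]; rfl)).trans hρi

theorem Set.Infinite.exists_homogeneous_infinite_subset (n : ℕ) (f : Finset α → κ) {S : Set α}
    (hS : S.Infinite) :
    ∃ H ⊆ S, H.Infinite ∧ ∃ r, ∀ U : Finset α, ↑U ⊆ H → #U = n → f U = r := by
  classical
  induction n generalizing f S with
  | zero => exact ⟨S, subset_rfl, hS, f ∅, fun U _ hU => by rw [Finset.card_eq_zero.1 hU]⟩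
  | succ n ih =>
    have step : ∀ C : {C : Set α // C.Infinite}, ∃ x ∈ C.1, ∃ D : {D : Set α // D.Infinite},
        D.1 ⊆ C.1 \ {x} ∧ ∃ r, ∀ U : Finset α, ↑U ⊆ D.1 → #U = n → f (insert x U) = r := by
      rintro ⟨C, hC⟩
      obtain ⟨x, hx⟩ := hC.nonempty
      obtain ⟨D, hDC, hD, r, hr⟩ := ih (fun U => f (insert x U)) (hC.sdiff (finite_singleton x))
      exact ⟨x, hx, ⟨D, hD⟩, hDC, r, hr⟩
    choose x hx D hDC r hr using step
    let C : ℕ → {C : Set α // C.Infinite} := fun m => D^[m] ⟨S, hS⟩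
    have hC_succ : ∀ m, C (m + 1) = D (C m) := fun m => Function.iterate_succ_apply' D m _
    have hC_anti : Antitone fun m => (C m).1 := antitone_nat_of_succ_le fun m => by
      rw [hC_succ]
      exact (hDC _).trans sdiff_subset
    exact exists_homogeneous_of_antitone (ρ := fun m => r (C m)) hC_anti (fun m => hx (C m))
      (fun m h => ((hC_succ m ▸ hDC (C m)) h).2 rfl)
      (fun m => hC_succ m ▸ hr (C m))

end Ramsey

section Lowest

variable {β : Type*} [LinearOrder β]

def Finset.lowest (Y : Finset β) (s : ℕ) : Finset β := {y ∈ Y | #{z ∈ Y | z < y} < s}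

theorem Finset.lowest_union_card {I J : Finset β} (h : ∀ i ∈ I, ∀ j ∈ J, i < j) :
    (I ∪ J).lowest #I = I := by
  ext y
  simp only [lowest, Finset.mem_filter, Finset.mem_union]
  constructor
  · rintro ⟨hy | hy, hcard⟩
    · exact hy
    · have hI : I ⊆ {z ∈ I ∪ J | z < y} := fun i hi =>
        Finset.mem_filter.2 ⟨Finset.mem_union_left _ hi, h i hi y hy⟩
      exact absurd (Finset.card_le_card hI) (not_le.2 hcard)
  · intro hy
    refine ⟨Or.inl hy, Finset.card_lt_card ?_⟩
    have hsub : {z ∈ I ∪ J | z < y} ⊆ I := by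
      intro z hz
      obtain ⟨hz, hzy⟩ := Finset.mem_filter.1 hz
      rcases Finset.mem_union.1 hz with hz | hz
      · exact hz
      · exact absurd (h y hy z hz) (not_lt.2 hzy.le)
    exact (Finset.ssubset_iff_of_subset hsub).2
      ⟨y, hy, fun hy' => lt_irrefl y (Finset.mem_filter.1 hy').2⟩

end Lowest

theorem exists_infinite_homogeneous_image_union {α κ : Type*} [DecidableEq α] [Finite κ]
    (χ : Finset α → κ) (d : ℕ) (a b : ℕ → α) :
    ∃ H : Set ℕ, H.Infinite ∧ ∃ r : ℕ → κ, ∀ I J : Finset ℕ, ↑I ∪ ↑J ⊆ H →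
      (∀ i ∈ I, ∀ j ∈ J, i < j) → #I + #J = d → χ (I.image a ∪ J.image b) = r #I := by
  let G : Finset ℕ → (Fin (d + 1) → κ) := fun Y s =>
    χ ((Y.lowest s).image a ∪ (Y \ Y.lowest s).image b)
  obtain ⟨H, -, hH, r, hr⟩ := infinite_univ.exists_homogeneous_infinite_subset d G
  refine ⟨H, hH, fun s => r (Fin.ofNat (d + 1) s), fun I J hIJ hlt hcard => ?_⟩
  have hdisj : Disjoint I J := Finset.disjoint_left.2 fun i hi hj => lt_irrefl i (hlt i hi i hj)
  have hY : G (I ∪ J) = r := hr _ (by rwa [Finset.coe_union])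
    (by rw [Finset.card_union_of_disjoint hdisj, hcard])
  have hs : (Fin.ofNat (d + 1) #I : ℕ) = #I := by
    rw [Fin.val_ofNat]
    exact Nat.mod_eq_of_lt (by omega)
  rw [← hY]
  simp only [G, hs, Finset.lowest_union_card hlt, Finset.union_sdiff_cancel_left hdisj]

theorem Finset.exists_image_union_of_subset {ι α : Type*} [DecidableEq α] {A : Set α}
    [DecidablePred (· ∈ A)] {a b : ι → α} (haA : ∀ i, a i ∈ A) (hbA : ∀ i, b i ∉ A)
    {I : Finset ι} {J : Set ι} {T : Finset α} (hT : ↑T ⊆ ↑(I.image a) ∪ b '' J) :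
    ∃ I' J' : Finset ι, ↑I' ⊆ (I : Set ι) ∧ ↑J' ⊆ J ∧
      I'.image a = {x ∈ T | x ∈ A} ∧ J'.image b = {x ∈ T | x ∉ A} := by
  obtain ⟨I', hI', hTA⟩ : ∃ I' : Finset ι, ↑I' ⊆ (I : Set ι) ∧ I'.image a = {x ∈ T | x ∈ A} := by
    refine Finset.subset_set_image_iff.1 fun x hx => ?_
    obtain ⟨hxT, hxA⟩ := Finset.mem_filter.1 hx
    rcases hT hxT with h | ⟨j, -, rfl⟩
    · simpa only [Finset.coe_image] using h
    · exact absurd hxA (hbA j)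
  obtain ⟨J', hJ', hTB⟩ : ∃ J' : Finset ι, ↑J' ⊆ J ∧ J'.image b = {x ∈ T | x ∉ A} := by
    refine Finset.subset_set_image_iff.1 fun x hx => ?_
    obtain ⟨hxT, hxA⟩ := Finset.mem_filter.1 hx
    rcases hT hxT with h | h
    · obtain ⟨i, -, rfl⟩ := Finset.mem_image.1 h
      exact absurd (haA i) hxA
    · exact h
  exact ⟨I', J', hI', hJ', hTA, hTB⟩

theorem stmt4_general (c d : ℕ) (α : Type) (A B : Set α)
    (hAi : A.Infinite)
    (hBi : B.Infinite) (hAB : Disjoint A B)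
    (χ : Finset α → Fin c) (k : ℕ) :
    ∃ (A' : Finset α) (B' : Set α), ↑A' ⊆ A ∧ A'.card = k ∧ B' ⊆ B ∧ B'.Infinite ∧
      ∃ col : ℕ → Fin c, ∀ T : Finset α, ↑T ⊆ (↑A' : Set α) ∪ B' → T.card = d →
        χ T = col (((T : Set α) ∩ A).ncard) := by
  classical
  obtain ⟨a, ha_inj, haA⟩ : ∃ a : ℕ → α, a.Injective ∧ ∀ n, a n ∈ A :=
    ⟨_, Subtype.val_injective.comp (hAi.natEmbedding A).injective,
      fun n => (hAi.natEmbedding A n).2⟩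
  obtain ⟨b, hb_inj, hbB⟩ : ∃ b : ℕ → α, b.Injective ∧ ∀ n, b n ∈ B :=
    ⟨_, Subtype.val_injective.comp (hBi.natEmbedding B).injective,
      fun n => (hBi.natEmbedding B n).2⟩
  obtain ⟨H, hH, r, hr⟩ := exists_infinite_homogeneous_image_union χ d a b
  obtain ⟨I, hIH, rfl⟩ := hH.exists_subset_card_eq k
  set J := H \ Set.Iic (I.sup id)
  refine ⟨I.image a, b '' J, ?_, card_image_of_injective _ ha_inj, ?_,
    (hH.sdiff (finite_Iic _)).image hb_inj.injOn, r, fun T hT hTd => ?_⟩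
  · simpa only [coe_image] using (image_subset_range a _).trans (range_subset_iff.2 haA)
  · exact (image_subset_range b _).trans (range_subset_iff.2 hbB)
  obtain ⟨I', J', hI', hJ', hTA, hTB⟩ :=
    exists_image_union_of_subset haA (fun n => Set.disjoint_right.1 hAB (hbB n)) hT
  have hlt : ∀ i ∈ I', ∀ j ∈ J', i < j := fun i hi j hj =>
    (le_sup (f := id) (hI' hi)).trans_lt (not_le.1 (hJ' hj).2)
  have hcardA : ((T : Set α) ∩ A).ncard = #I' := by
    rw [← Finset.card_image_of_injective I' ha_inj, hTA, ← ncard_coe_finset, coe_filter]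
    rfl
  have hcard : #I' + #J' = d := by
    rw [← Finset.card_image_of_injective I' ha_inj, ← Finset.card_image_of_injective J' hb_inj,
      hTA, hTB, card_filter_add_card_filter_not, hTd]
  rw [hcardA, ← hr I' J' (union_subset (hI'.trans hIH) (hJ'.trans sdiff_subset)) hlt hcard, hTA,
    hTB, filter_union_filter_not_eq]

theorem stmt4 (c d : ℕ) (α : Type) (A B : Set α)
    (hAc : A.Countable) (hAi : A.Infinite)
    (hBc : B.Countable) (hBi : B.Infinite) (hAB : Disjoint A B)
    (χ : Finset α → Fin c) (k : ℕ) (hk : 1 ≤ k) :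
    ∃ (A' : Finset α) (B' : Set α), ↑A' ⊆ A ∧ A'.card = k ∧ B' ⊆ B ∧ B'.Infinite ∧
      ∃ col : ℕ → Fin c, ∀ T : Finset α, ↑T ⊆ (↑A' : Set α) ∪ B' → T.card = d →
        χ T = col (((T : Set α) ∩ A).ncard) :=
  stmt4_general c d α A B hAi hBi hAB χ k
end

section
/- Let A ⊆ ℝ be a finite arithmetic progression with |A| ≥ 2 and let d ≥ 1. Then k(A,d) := d + max_{1 ≤ s ≤ d} ⌊d/s⌋·(W(A,s) − s) equals |A|·d. -/
/-- The von zur Gathen–Roche type parameter `W(A,d)`. -/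
noncomputable def Wparam (A : Set ℝ) (d : ℕ) : ℕ :=
  sInf {W : ℕ | ∀ P : Polynomial ℝ, P.natDegree ≤ d →
    (∀ i : ℕ, i ≤ W → P.eval (i : ℝ) ∈ A) → ∃ r, P = Polynomial.C r}

/-- The junta threshold parameter `k(A,d) = d + max_{1 ≤ s ≤ d} ⌊d/s⌋·(W(A,s) − s)`. -/
noncomputable def kparam (A : Set ℝ) (d : ℕ) : ℕ :=
  d + (Finset.Icc 1 d).sup (fun s => (d / s) * (Wparam A s - s))

/-!
For an arithmetic progression `A = {a + i b | i < m}`, pigeonhole gives `W(A,s) ≤ m s`: among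
`m s + 1` values in `A` some value is taken more than `s` times, which a nonconstant polynomial of
degree at most `s` cannot do. The line `a + b X` shows `W(A,1) ≥ m`. Hence every term
`⌊d/s⌋ (W(A,s) - s)` is at most `⌊d/s⌋ s (m - 1) ≤ d (m - 1)`, with equality at `s = 1`,
and `k(A,d) = d + d (m - 1) = m d`.
-/

open Polynomial

/-- `Wparam A s` is, by definition, `sInf {W | ForcesConstant A s W}`. -/
def ForcesConstant (A : Set ℝ) (s W : ℕ) : Prop :=
  ∀ P : ℝ[X], P.natDegree ≤ s → (∀ i : ℕ, i ≤ W → P.eval (i : ℝ) ∈ A) → ∃ r, P = C r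

lemma forcesConstant_card_mul (A : Finset ℝ) (s : ℕ) : ForcesConstant A s (A.card * s) := by
  intro P hdeg hval
  have hmaps : ∀ i ∈ Finset.range (A.card * s + 1), P.eval (i : ℝ) ∈ A := fun i hi =>
    hval i (Nat.lt_succ_iff.mp (Finset.mem_range.mp hi))
  obtain ⟨y, -, hy⟩ :=
    Finset.exists_lt_card_fiber_of_mul_lt_card_of_maps_to hmaps (n := s) (by simp)
  set T : Finset ℕ := {i ∈ Finset.range (A.card * s + 1) | P.eval (i : ℝ) = y}
  refine ⟨y, eq_of_natDegree_lt_card_of_eval_eq P (C y) (f := fun i : T => (i.1 : ℝ))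
    (Nat.cast_injective.comp Subtype.val_injective) (fun i => ?_) ?_⟩
  · simpa using (Finset.mem_filter.mp i.2).2
  · simp only [natDegree_C, Nat.max_zero, Fintype.card_coe]
    exact hdeg.trans_lt hy

lemma Wparam_le_card_mul (A : Finset ℝ) (s : ℕ) : Wparam A s ≤ A.card * s :=
  Nat.sInf_le (forcesConstant_card_mul A s)

lemma forcesConstant_Wparam (A : Finset ℝ) (s : ℕ) : ForcesConstant A s (Wparam A s) :=
  Nat.sInf_mem (s := {W | ForcesConstant A s W}) ⟨_, forcesConstant_card_mul A s⟩

lemma le_Wparam_of_eval_mem {A : Finset ℝ} {s W : ℕ} {P : ℝ[X]} (hP : 0 < P.natDegree)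
    (hdeg : P.natDegree ≤ s) (hval : ∀ i < W, P.eval (i : ℝ) ∈ A) : W ≤ Wparam A s := by
  by_contra! hlt
  obtain ⟨r, rfl⟩ := forcesConstant_Wparam A s P hdeg fun i hi => hval i (hi.trans_lt hlt)
  simp at hP

section ArithmeticProgression

variable {a b : ℝ}

lemma card_image_arithProg (hb : b ≠ 0) (m : ℕ) :
    ((Finset.range m).image fun i : ℕ => a + (i : ℝ) * b).card = m := by
  rw [Finset.card_image_of_injective _ fun i j h => by simpa [hb] using h, Finset.card_range]

lemma Wparam_one_arithProg (hb : b ≠ 0) (m : ℕ) :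
    Wparam ↑((Finset.range m).image fun i : ℕ => a + (i : ℝ) * b) 1 = m := by
  refine le_antisymm ?_ ?_
  · exact (Wparam_le_card_mul _ 1).trans_eq (by rw [card_image_arithProg hb, mul_one])
  · refine le_Wparam_of_eval_mem (P := C b * X + C a) (by rw [natDegree_linear hb]; norm_num)
      (natDegree_linear hb).le fun i hi => Finset.mem_image.mpr ⟨i, Finset.mem_range.mpr hi, ?_⟩
    simp only [eval_add, eval_mul, eval_C, eval_X]
    ring

end ArithmeticProgression

lemma kparam_eq_of_Wparam {A : Set ℝ} {n : ℕ} (hn : 1 ≤ n) (hW1 : Wparam A 1 = n)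
    (hW : ∀ s, Wparam A s ≤ n * s) (d : ℕ) : kparam A d = n * d := by
  suffices hsup : (Finset.Icc 1 d).sup (fun s => (d / s) * (Wparam A s - s)) = d * (n - 1) by
    rw [kparam, hsup]
    obtain ⟨k, rfl⟩ := Nat.exists_eq_add_of_le' hn
    simp only [Nat.add_sub_cancel]
    ring
  refine le_antisymm (Finset.sup_le fun s _ => ?_) ?_
  · calc d / s * (Wparam A s - s) ≤ d / s * (s * (n - 1)) := by
          gcongr
          rw [Nat.mul_sub, mul_one, mul_comm]
          exact Nat.sub_le_sub_right (hW s) s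
      _ = d / s * s * (n - 1) := by ring
      _ ≤ d * (n - 1) := Nat.mul_le_mul_right _ (Nat.div_mul_le_self d s)
  · rcases Nat.eq_zero_or_pos d with rfl | hd
    · simp
    · simpa [hW1] using Finset.le_sup (f := fun s => (d / s) * (Wparam A s - s))
        (Finset.mem_Icc.mpr ⟨le_rfl, hd⟩)

theorem stmt10_general (a b : ℝ) (hb : b ≠ 0) (m : ℕ) (hm : 2 ≤ m)
    (A : Finset ℝ) (hA : A = (Finset.range m).image (fun i : ℕ => a + (i : ℝ) * b))
    (d : ℕ) :
    kparam ↑A d = A.card * d := by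
  subst hA
  rw [card_image_arithProg hb]
  exact kparam_eq_of_Wparam (by omega) (Wparam_one_arithProg hb m)
    (fun s => (Wparam_le_card_mul _ s).trans_eq (by rw [card_image_arithProg hb])) d

theorem stmt10 (a b : ℝ) (hb : b ≠ 0) (m : ℕ) (hm : 2 ≤ m)
    (A : Finset ℝ) (hA : A = (Finset.range m).image (fun i : ℕ => a + (i : ℝ) * b))
    (d : ℕ) (hd : 1 ≤ d) :
    kparam ↑A d = A.card * d :=
  stmt10_general a b hb m hm A hA d
end

section
/- Let 1 ≤ k ≤ d, let a ≠ b be reals, let m ≥ k, and set n = 2km. Define f on the slice binom([n],k) by f(x) = a + (b−a)·Σ_{i=1}^m Π_{j=1}^k x_{(i−1)k+j}. Then f takes values only in {a,b}, is a polynomial of degree at most k ≤ d, and f is not an (m−1)-junta. -/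
/-- Membership in the slice `binom([n],k)`, with points encoded as `x : ℕ → Bool`
supported on the first `n` coordinates. -/
def onSlice (n k : ℕ) (x : ℕ → Bool) : Prop :=
  ((Finset.range n).filter (fun i => x i = true)).card = k ∧ ∀ i, n ≤ i → x i = false

/-!
The coordinates split into blocks `B_i = [ik, ik + k)`, and `f = a + (b - a) · N` where `N` counts
the blocks `B_i`, `i < m`, on which `x` is identically one. On the slice a full block already
carries all `k` ones of `x`, so it is the support of `x`; hence `N ≤ 1` and `f ∈ {a, b}`.
Each block product is a monomial of degree `k`. Finally, a set `K` of at most `m - 1` coordinates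
meets at most `m - 1` blocks, so it misses some block `B_i` with `i < m` and some `B_j` with
`m ≤ j < 2m`; the indicators of `B_i` and `B_j` agree on `K` and lie on the slice, but `f` takes
the values `b` and `a` on them.
-/

open Finset

namespace Slice

def monomial (S : Finset ℕ) (x : ℕ → Bool) : ℝ :=
  ∏ i ∈ S, if x i = true then 1 else 0

def block (k i : ℕ) : Finset ℕ :=
  Ico (i * k) (i * k + k)

def blockPoint (k i e : ℕ) : Bool :=
  decide (e ∈ block k i)

def fullBlocks (k m : ℕ) (x : ℕ → Bool) : Finset ℕ :=
  {i ∈ range m | ∀ e ∈ block k i, x e = true}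

lemma card_block (k i : ℕ) : #(block k i) = k := by
  simp [block]

lemma block_subset_range {k m i : ℕ} (hi : i < 2 * m) : block k i ⊆ range (2 * k * m) := by
  intro e he
  have : (i + 1) * k ≤ 2 * m * k := Nat.mul_le_mul_right k hi
  simp only [block, mem_Ico, mem_range] at he ⊢
  nlinarith

lemma div_eq_of_mem_block {k i e : ℕ} (he : e ∈ block k i) : e / k = i := by
  rw [block, mem_Ico] at he
  exact Nat.div_eq_of_lt_le he.1 (by rw [Nat.succ_mul]; exact he.2)

lemma block_injective {k : ℕ} (hk : 0 < k) : Function.Injective (block k) := by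
  intro i j h
  have hi : i * k ∈ block k i := by simp [block, hk]
  rw [← div_eq_of_mem_block hi, div_eq_of_mem_block (h ▸ hi)]

lemma prod_range_eq_monomial_block (k i : ℕ) (x : ℕ → Bool) :
    ∏ j ∈ range k, (if x (i * k + j) = true then (1 : ℝ) else 0) =
      monomial (block k i) x := by
  rw [monomial, block, prod_Ico_eq_prod_range, Nat.add_sub_cancel_left]

lemma sum_prod_range_eq_card_fullBlocks (k m : ℕ) (x : ℕ → Bool) :
    ∑ i ∈ range m, ∏ j ∈ range k, (if x (i * k + j) = true then (1 : ℝ) else 0) =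
      #(fullBlocks k m x) := by
  simp only [prod_range_eq_monomial_block]
  simp only [monomial, prod_boole, sum_boole, fullBlocks]

lemma _root_.onSlice.support_eq_block {n k i : ℕ} {x : ℕ → Bool} (hx : onSlice n k x)
    (hB : block k i ⊆ range n) (hfull : ∀ e ∈ block k i, x e = true) :
    {e ∈ range n | x e = true} = block k i :=
  (eq_of_subset_of_card_le (fun e he => mem_filter.mpr ⟨hB he, hfull e he⟩)
    (by rw [hx.1, card_block])).symm

lemma card_fullBlocks_le_one {k m : ℕ} (hk : 0 < k) {x : ℕ → Bool}
    (hx : onSlice (2 * k * m) k x) : #(fullBlocks k m x) ≤ 1 := by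
  refine card_le_one.mpr fun i hi j hj => block_injective hk ?_
  simp only [fullBlocks, mem_filter, mem_range] at hi hj
  rw [← hx.support_eq_block (block_subset_range (by omega)) hi.2,
    hx.support_eq_block (block_subset_range (by omega)) hj.2]

lemma support_blockPoint {n k i : ℕ} (hB : block k i ⊆ range n) :
    {e ∈ range n | blockPoint k i e = true} = block k i := by
  simp only [blockPoint, decide_eq_true_eq]
  exact filter_mem_eq_inter.trans (inter_eq_right.mpr hB)

lemma onSlice_blockPoint {n k i : ℕ} (hB : block k i ⊆ range n) :
    onSlice n k (blockPoint k i) := by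
  refine ⟨by rw [support_blockPoint hB, card_block], fun e he => ?_⟩
  simp only [blockPoint, decide_eq_false_iff_not]
  exact fun h => (mem_range.mp (hB h)).not_ge he

lemma blockPoint_eq_false {k i e : ℕ} (h : e / k ≠ i) : blockPoint k i e = false := by
  simpa [blockPoint] using mt div_eq_of_mem_block h

lemma card_fullBlocks_blockPoint {k m i : ℕ} (hk : 0 < k) (hi : i < 2 * m) :
    #(fullBlocks k m (blockPoint k i)) = if i < m then 1 else 0 := by
  have hB := block_subset_range (k := k) hi
  have : fullBlocks k m (blockPoint k i) = {j ∈ range m | j = i} := by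
    refine filter_congr fun j hj => ⟨fun hfull => block_injective hk ?_, ?_⟩
    · rw [← (onSlice_blockPoint hB).support_eq_block (block_subset_range (by simp at hj; omega))
        hfull, support_blockPoint hB]
    · rintro rfl e he
      simpa [blockPoint] using he
  rw [this, filter_eq']
  split_ifs <;> simp_all

lemma exists_mem_forall_div_ne (k : ℕ) {K s : Finset ℕ} (h : #K < #s) :
    ∃ i ∈ s, ∀ e ∈ K, e / k ≠ i := by
  obtain ⟨i, hi, hiK⟩ := exists_mem_notMem_of_card_lt_card (card_image_le.trans_lt h)
  exact ⟨i, hi, fun e he hei => hiK (mem_image.mpr ⟨e, he, hei⟩)⟩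

lemma sum_comp_eq_sum_card_fiber_mul {ι κ : Type*} [DecidableEq κ] {s : Finset ι}
    {t : Finset κ} {g : ι → κ} (hg : ∀ i ∈ s, g i ∈ t) (φ : κ → ℝ) :
    ∑ i ∈ s, φ (g i) = ∑ j ∈ t, #{i ∈ s | g i = j} * φ j := by
  simp only [← sum_fiberwise_of_maps_to' hg, sum_const, nsmul_eq_mul]

lemma exists_coeff_add_mul_sum_monomial_block (k m : ℕ) (a c : ℝ) :
    ∃ coeff : Finset ℕ → ℝ, ∀ x, a + c * ∑ i ∈ range m, monomial (block k i) x =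
      ∑ S ∈ (range (2 * k * m)).powerset.filter (fun S => S.card ≤ k),
        coeff S * monomial S x := by
  set T := (range (2 * k * m)).powerset.filter (fun S => S.card ≤ k)
  have hT : ∀ i ∈ range m, block k i ∈ T := fun i hi => by
    simp only [T, mem_filter, mem_powerset, card_block, le_refl, and_true]
    exact block_subset_range (by simp at hi; omega)
  have hempty : ∅ ∈ T := by simp [T]
  refine ⟨fun S => (if S = ∅ then a else 0) + c * #{i ∈ range m | block k i = S},
    fun x => ?_⟩
  rw [sum_comp_eq_sum_card_fiber_mul hT (fun S => monomial S x)]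
  simp only [add_mul, sum_add_distrib, ite_mul, zero_mul, sum_ite_eq', if_pos hempty,
    monomial, prod_empty, mul_one, mul_assoc, ← mul_sum]

end Slice

open Slice in
theorem stmt12_general (k m : ℕ) (hk : 1 ≤ k) (hm : k ≤ m)
    (a b : ℝ) (hab : a ≠ b) (n : ℕ) (hn : n = 2 * k * m)
    (f : (ℕ → Bool) → ℝ)
    (hf : ∀ x, f x = a + (b - a) * ∑ i ∈ Finset.range m,
      ∏ j ∈ Finset.range k, (if x (i * k + j) = true then (1:ℝ) else 0)) :
    (∀ x, onSlice n k x → f x ∈ ({a, b} : Set ℝ)) ∧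
    (∃ c : Finset ℕ → ℝ, ∀ x, onSlice n k x →
      f x = ∑ S ∈ (Finset.range n).powerset.filter (fun S => S.card ≤ k),
        c S * ∏ i ∈ S, (if x i = true then (1:ℝ) else 0)) ∧
    ¬ ∃ K : Finset ℕ, K.card ≤ m - 1 ∧ ∀ x y, onSlice n k x → onSlice n k y →
      (∀ i ∈ K, x i = y i) → f x = f y := by
  subst hn
  have hf_card : ∀ x, f x = a + (b - a) * #(fullBlocks k m x) := fun x => by
    rw [hf, sum_prod_range_eq_card_fullBlocks]
  refine ⟨fun x hx => ?_, ?_, ?_⟩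
  · rcases Nat.le_one_iff_eq_zero_or_eq_one.mp (card_fullBlocks_le_one hk hx) with h | h <;>
      simp [hf_card, h]
  · obtain ⟨c, hc⟩ := exists_coeff_add_mul_sum_monomial_block k m a (b - a)
    exact ⟨c, fun x _ => by
      simp only [hf, prod_range_eq_monomial_block]
      exact hc x⟩
  · rintro ⟨K, hK, hconst⟩
    obtain ⟨i, hi, hiK⟩ := exists_mem_forall_div_ne k (s := range m)
      (hK.trans_lt (by simp; omega))
    obtain ⟨j, hj, hjK⟩ := exists_mem_forall_div_ne k (s := Ico m (2 * m))
      (hK.trans_lt (by simp; omega))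
    rw [mem_range] at hi
    rw [mem_Ico] at hj
    have hfij := hconst (blockPoint k i) (blockPoint k j)
      (onSlice_blockPoint (block_subset_range (by omega)))
      (onSlice_blockPoint (block_subset_range (by omega)))
      (fun e he => by rw [blockPoint_eq_false (hiK e he), blockPoint_eq_false (hjK e he)])
    rw [hf_card, hf_card, card_fullBlocks_blockPoint hk (by omega),
      card_fullBlocks_blockPoint hk hj.2, if_pos hi, if_neg (by omega)] at hfij
    exact hab (by simpa using hfij.symm)

theorem stmt12 (k d m : ℕ) (hk : 1 ≤ k) (hkd : k ≤ d) (hm : k ≤ m)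
    (a b : ℝ) (hab : a ≠ b) (n : ℕ) (hn : n = 2 * k * m)
    (f : (ℕ → Bool) → ℝ)
    (hf : ∀ x, f x = a + (b - a) * ∑ i ∈ Finset.range m,
      ∏ j ∈ Finset.range k, (if x (i * k + j) = true then (1:ℝ) else 0)) :
    (∀ x, onSlice n k x → f x ∈ ({a, b} : Set ℝ)) ∧
    (∃ c : Finset ℕ → ℝ, ∀ x, onSlice n k x →
      f x = ∑ S ∈ (Finset.range n).powerset.filter (fun S => S.card ≤ k),
        c S * ∏ i ∈ S, (if x i = true then (1:ℝ) else 0)) ∧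
    ¬ ∃ K : Finset ℕ, K.card ≤ m - 1 ∧ ∀ x y, onSlice n k x → onSlice n k y →
      (∀ i ∈ K, x i = y i) → f x = f y :=
  stmt12_general k m hk hm a b hab n hn f hf
end

section
/- Let k ≥ d ≥ 1, let A ⊆ ℝ be finite, and fix n ≥ k + d. There exists a finite set 𝔠 ⊆ ℝ (depending only on A, d, k) such that: if f : binom([n],k) → A satisfies f(x) = Σ_{|S| = d} c(S)·x_S for real coefficients c(S), then every c(S) ∈ 𝔠. -/
/-!
Fix the `d`-set `S`, and a `k`-set `W` disjoint from it (there is room since `k + d ≤ n`). For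
`J ⊆ S` and `V ⊆ W` with `|J| + |V| = k`, the value of `f` at the indicator of `J ∪ V` is the sum
of the `c T` over the `d`-sets `T ⊆ J ∪ V`. Sum these values with a weight `μ |J|`; the total
weight then received by `c T` depends only on `|T ∩ S|`, through a triangular matrix of binomial
counts with nonzero diagonal. Solving that system for `μ` makes the weighted sum equal to `c S`.
As `μ` depends only on `d` and `k` and `f` takes values in `A`, `c S` lies in a finite sumset of
dilates of `A` that does not depend on `n`.
-/

open Finset
open scoped Pointwise Matrix

theorem Set.finsetSum_mem_card_nsmul {ι M : Type*} [AddCommMonoid M] {s : Finset ι} {B : Set M}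
    {x : ι → M} (h : ∀ i ∈ s, x i ∈ B) : ∑ i ∈ s, x i ∈ #s • B := by
  rw [← sum_const]
  exact Set.finsetSum_mem_finsetSum s _ x h

namespace Finset

variable {α : Type*} [DecidableEq α]

theorem card_powersetCard_filter_superset {Ω B : Finset α} (hB : B ⊆ Ω) {r : ℕ} (hr : r ≤ #Ω) :
    #{P ∈ Ω.powersetCard r | B ⊆ P} = (#Ω - #B).choose (#Ω - r) := by
  rw [← card_sdiff_of_subset hB, ← card_powersetCard]
  refine card_nbij' (Ω \ ·) (Ω \ ·) ?_ ?_ ?_ ?_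
  · intro P hP
    simp only [mem_coe, mem_filter, mem_powersetCard] at hP ⊢
    exact ⟨sdiff_subset_sdiff le_rfl hP.2, by rw [card_sdiff_of_subset hP.1.1, hP.1.2]⟩
  · intro Q hQ
    simp only [mem_coe, mem_filter, mem_powersetCard] at hQ ⊢
    refine ⟨⟨sdiff_subset, ?_⟩, subset_sdiff.2 ⟨hB, (subset_sdiff.1 hQ.1).2.symm⟩⟩
    rw [card_sdiff_of_subset (hQ.1.trans sdiff_subset), hQ.2]
    omega
  · intro P hP
    simp only [mem_coe, mem_filter, mem_powersetCard] at hP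
    exact sdiff_sdiff_eq_self hP.1.1
  · intro Q hQ
    simp only [mem_coe, mem_powersetCard] at hQ
    exact sdiff_sdiff_eq_self (hQ.1.trans sdiff_subset)

theorem subset_union_iff_inter_subset {S W T J V : Finset α} (hSW : Disjoint S W)
    (hT : T ⊆ S ∪ W) (hJ : J ⊆ S) (hV : V ⊆ W) : T ⊆ J ∪ V ↔ T ∩ S ⊆ J ∧ T ∩ W ⊆ V := by
  rw [disjoint_left] at hSW
  simp only [subset_iff, mem_inter, mem_union] at *
  grind

theorem sum_sum_ite_subset_union {S W T : Finset α} (hSW : Disjoint S W) (hT : T ⊆ S ∪ W)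
    {j r : ℕ} (hj : j ≤ #S) (hr : r ≤ #W) :
    ∑ J ∈ S.powersetCard j, ∑ V ∈ W.powersetCard r, (if T ⊆ J ∪ V then (1 : ℝ) else 0) =
      (#S - #(T ∩ S)).choose (#S - j) * (#W - #(T ∩ W)).choose (#W - r) := by
  have hsplit : ∀ J ∈ S.powersetCard j, ∀ V ∈ W.powersetCard r,
      (if T ⊆ J ∪ V then (1 : ℝ) else 0) =
        (if T ∩ S ⊆ J then 1 else 0) * (if T ∩ W ⊆ V then 1 else 0) := by
    intro J hJ V hV
    rw [ite_zero_mul_ite_zero, one_mul]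
    exact if_congr
      (subset_union_iff_inter_subset hSW hT (mem_powersetCard.1 hJ).1 (mem_powersetCard.1 hV).1)
      rfl rfl
  rw [sum_congr rfl fun J hJ => sum_congr rfl (hsplit J hJ), ← sum_mul_sum, sum_boole, sum_boole,
    card_powersetCard_filter_superset inter_subset_right hj,
    card_powersetCard_filter_superset inter_subset_right hr]

theorem card_union_of_mem_powersetCard {S W J V : Finset α} (hSW : Disjoint S W) {j k : ℕ}
    (hjk : j ≤ k) (hJ : J ∈ S.powersetCard j) (hV : V ∈ W.powersetCard (k - j)) :
    #(J ∪ V) = k := by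
  rw [mem_powersetCard] at hJ hV
  rw [card_union_of_disjoint (hSW.mono hJ.1 hV.1), hJ.2, hV.2]
  omega

end Finset

theorem wt_decide_mem {n : ℕ} (P : Finset (Fin n)) : wt (fun i => decide (i ∈ P)) = #P := by
  simp [wt]

theorem prod_ite_decide_mem {α R : Type*} [DecidableEq α] [CommSemiring R] (P T : Finset α) :
    ∏ i ∈ T, (if decide (i ∈ P) = true then (1 : R) else 0) = if T ⊆ P then 1 else 0 := by
  simp only [decide_eq_true_eq, prod_boole]
  rfl

/-- Entry `(j, t)` counts the pairs `(J, V)` with `J` a `j`-subset of a `d`-set `S`, `V` a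
`(k - j)`-subset of a disjoint `k`-set `W` and `T ⊆ J ∪ V`, for a `d`-set `T ⊆ S ∪ W` with
`|T ∩ S| = t`. -/
def inclusionCountMatrix (d k : ℕ) : Matrix (Fin (d + 1)) (Fin (d + 1)) ℝ :=
  Matrix.of fun j t => ((d - t).choose (d - j) * (k - (d - t)).choose j : ℕ)

theorem inclusionCountMatrix_isLowerTriangular (d k : ℕ) :
    (inclusionCountMatrix d k).IsLowerTriangular := by
  intro j t htj
  have htj : (j : ℕ) < t := htj
  have : d - (t : ℕ) < d - j := by omega
  simp [inclusionCountMatrix, Nat.choose_eq_zero_of_lt this]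

theorem isUnit_inclusionCountMatrix {d k : ℕ} (hdk : d ≤ k) :
    IsUnit (inclusionCountMatrix d k) := by
  rw [Matrix.isUnit_iff_isUnit_det, isUnit_iff_ne_zero,
    Matrix.det_of_isLowerTriangular _ (inclusionCountMatrix_isLowerTriangular d k)]
  refine prod_ne_zero_iff.2 fun t _ => ?_
  have ht : (t : ℕ) ≤ k - (d - t) := by omega
  simp [inclusionCountMatrix, (Nat.choose_pos ht).ne']

section CoeffFunctional

variable {α : Type*} [DecidableEq α] {d : ℕ} (k : ℕ) (μ : Fin (d + 1) → ℝ) (S W : Finset α)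

def coeffFunctional (g : Finset α → ℝ) : ℝ :=
  ∑ j : Fin (d + 1), μ j * ∑ J ∈ S.powersetCard j, ∑ V ∈ W.powersetCard (k - j), g (J ∪ V)

variable {k μ S W}

theorem coeffFunctional_congr (hSW : Disjoint S W) (hdk : d ≤ k) {g g' : Finset α → ℝ}
    (h : ∀ P, #P = k → g P = g' P) : coeffFunctional k μ S W g = coeffFunctional k μ S W g' :=
  sum_congr rfl fun j _ => congrArg (μ j * ·) <| sum_congr rfl fun _ hJ => sum_congr rfl
    fun _ hV => h _ (card_union_of_mem_powersetCard hSW (j.is_le.trans hdk) hJ hV)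

theorem coeffFunctional_mem (hSW : Disjoint S W) (hdk : d ≤ k) {A : Set ℝ} {g : Finset α → ℝ}
    (hg : ∀ P, #P = k → g P ∈ A) :
    coeffFunctional k μ S W g ∈
      ∑ j : Fin (d + 1), ((#S).choose j * (#W).choose (k - j)) • μ j • A := by
  refine Set.finsetSum_mem_finsetSum _ _ _ fun j _ => ?_
  rw [← card_powersetCard, ← card_powersetCard, ← card_product, ← sum_product', mul_sum]
  refine Set.finsetSum_mem_card_nsmul fun p hp => Set.smul_mem_smul_set (hg _ ?_)
  exact card_union_of_mem_powersetCard hSW (j.is_le.trans hdk) (mem_product.1 hp).1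
    (mem_product.1 hp).2

variable (hμ : μ ᵥ* inclusionCountMatrix d k = Pi.single (Fin.last d) 1) (hdk : d ≤ k)
  (hSW : Disjoint S W) (hS : #S = d) (hW : #W = k)
include hμ hdk hSW hS hW

theorem coeffFunctional_ite_subset {T : Finset α} (hT : #T = d) :
    coeffFunctional k μ S W (fun P => if T ⊆ P then 1 else 0) = if T = S then 1 else 0 := by
  by_cases hTSW : T ⊆ S ∪ W
  · set t := #(T ∩ S)
    have hTW : #(T ∩ W) = d - t := by
      have := card_union_of_disjoint
        (hSW.mono (inter_subset_right : T ∩ S ⊆ S) (inter_subset_right : T ∩ W ⊆ W))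
      rw [← inter_union_distrib_left, inter_eq_left.2 hTSW, hT] at this
      omega
    have ht : t < d + 1 := Nat.lt_succ_of_le (hS ▸ card_le_card inter_subset_right)
    have hcount : ∀ j : Fin (d + 1), ∑ J ∈ S.powersetCard j, ∑ V ∈ W.powersetCard (k - j),
        (if T ⊆ J ∪ V then (1 : ℝ) else 0) = inclusionCountMatrix d k j ⟨t, ht⟩ := by
      intro j
      rw [sum_sum_ite_subset_union hSW hTSW (hS ▸ j.is_le) (hW ▸ Nat.sub_le k j), hS, hW, hTW,
        Nat.sub_sub_self (j.is_le.trans hdk)]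
      simp only [inclusionCountMatrix, Matrix.of_apply]
      push_cast
      rfl
    have hTS : T = S ↔ t = d := by
      refine ⟨fun h => by simp [t, h, hS], fun h => ?_⟩
      have hTS : T ⊆ S := inter_eq_left.1 (eq_of_subset_of_card_le inter_subset_left (by omega))
      exact eq_of_subset_of_card_le hTS (by omega)
    have hμt := congrFun hμ ⟨t, ht⟩
    simp only [Matrix.vecMul, dotProduct, Pi.single_apply, Fin.ext_iff, Fin.val_last] at hμt
    simp_rw [coeffFunctional, hcount, hμt]
    exact if_congr hTS.symm rfl rfl
  · have hTS : T ≠ S := fun h => hTSW (h ▸ subset_union_left)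
    rw [if_neg hTS]
    refine sum_eq_zero fun j _ => mul_eq_zero_of_right _ (sum_eq_zero fun J hJ =>
      sum_eq_zero fun V hV => if_neg fun hTJV => hTSW (hTJV.trans ?_))
    exact union_subset_union (mem_powersetCard.1 hJ).1 (mem_powersetCard.1 hV).1

theorem coeffFunctional_sum_mul_ite_subset [Fintype α] (c : Finset α → ℝ) :
    coeffFunctional k μ S W
      (fun P => ∑ T ∈ univ.filter (fun T : Finset α => #T = d), c T * if T ⊆ P then 1 else 0) =
      c S := by
  calc _ = ∑ T ∈ univ.filter (fun T : Finset α => #T = d),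
        c T * coeffFunctional k μ S W (fun P => if T ⊆ P then 1 else 0) := by
        simp_rw [coeffFunctional, mul_sum, mul_left_comm (μ _),
          sum_comm (t := univ.filter (fun T : Finset α => #T = d))]
    _ = c S := by
      rw [sum_congr rfl fun T hT => by
        rw [coeffFunctional_ite_subset hμ hdk hSW hS hW (mem_filter.1 hT).2]]
      simp only [mul_ite, mul_one, mul_zero]
      rw [sum_ite_eq', if_pos (mem_filter.2 ⟨mem_univ S, hS⟩)]

end CoeffFunctional

theorem stmt16_general (A : Finset ℝ) (d k : ℕ) (hdk : d ≤ k) :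
    ∃ C : Finset ℝ, ∀ n : ℕ, k + d ≤ n →
      ∀ (f : (Fin n → Bool) → ℝ) (c : Finset (Fin n) → ℝ),
        (∀ x, wt x = k → f x ∈ (A : Set ℝ)) →
        (∀ x, wt x = k →
          f x = ∑ S ∈ Finset.univ.filter (fun S : Finset (Fin n) => S.card = d),
            c S * ∏ i ∈ S, (if x i = true then (1:ℝ) else 0)) →
        ∀ S : Finset (Fin n), S.card = d → c S ∈ C := by
  classical
  obtain ⟨μ, hμ⟩ := Matrix.vecMul_surjective_iff_isUnit.2 (isUnit_inclusionCountMatrix hdk)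
    (Pi.single (Fin.last d) 1)
  refine ⟨∑ j : Fin (d + 1), (d.choose j * k.choose (k - j)) • μ j • A,
    fun n hn f c hA hrep S hS => ?_⟩
  obtain ⟨W, hWS, hW⟩ := exists_subset_card_eq (s := Sᶜ) (n := k)
    (by rw [card_compl, hS, Fintype.card_fin]; omega)
  have hSW : Disjoint S W := disjoint_of_subset_right hWS disjoint_compl_right
  have hcS : c S = coeffFunctional k μ S W (fun P => f (fun i => decide (i ∈ P))) := by
    rw [← coeffFunctional_sum_mul_ite_subset hμ hdk hSW hS hW c]
    refine coeffFunctional_congr hSW hdk fun P hP => ?_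
    simp only [hrep _ (by rw [wt_decide_mem, hP]), prod_ite_decide_mem]
  rw [hcS, ← mem_coe, coe_sum]
  simpa only [coe_nsmul, coe_smul_finset, hS, hW] using
    coeffFunctional_mem hSW hdk fun P hP => hA _ (by rw [wt_decide_mem, hP])

theorem stmt16 (A : Finset ℝ) (d k : ℕ) (hd : 1 ≤ d) (hdk : d ≤ k) :
    ∃ C : Finset ℝ, ∀ n : ℕ, k + d ≤ n →
      ∀ (f : (Fin n → Bool) → ℝ) (c : Finset (Fin n) → ℝ),
        (∀ x, wt x = k → f x ∈ (A : Set ℝ)) →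
        (∀ x, wt x = k →
          f x = ∑ S ∈ Finset.univ.filter (fun S : Finset (Fin n) => S.card = d),
            c S * ∏ i ∈ S, (if x i = true then (1:ℝ) else 0)) →
        ∀ S : Finset (Fin n), S.card = d → c S ∈ C :=
  stmt16_general A d k hdk
end

section
/- If k ≥ d and n ≥ k + d, then the representation of a degree-d function on the slice binom([n],k) as a linear combination of monomials x_S with |S| = d is unique: if Σ_{|S|=d} c_1(S) x_S = Σ_{|S|=d} c_2(S) x_S as functions on the slice, then c_1 = c_2. -/
/-!
Put `G U = ∑_{S ⊆ U, |S| = d} g S`, where `g = c₁ - c₂`, so that `G` vanishes on `k`-sets.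
Counting the `k`-sets between a `d`-set and `U` gives
`∑_{R ⊆ U, |R| = k} G R = C(|U| - d, k - d) • G U`, hence `G` vanishes on every set of size at
least `k`. Inclusion–exclusion recovers `g T = ∑_{V ⊆ T} (-1)^|V| G Vᶜ` for a `d`-set `T`, and
every `Vᶜ` here has size at least `n - d ≥ k`.
-/

open Finset

namespace Finset

variable {α M : Type*} [DecidableEq α]

section AddCommMonoid

variable [AddCommMonoid M]

theorem sum_powersetCard_sum_powersetCard {d k : ℕ} (hdk : d ≤ k) (U : Finset α)
    (g : Finset α → M) :
    ∑ R ∈ U.powersetCard k, ∑ S ∈ R.powersetCard d, g S =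
      (#U - d).choose (k - d) • ∑ S ∈ U.powersetCard d, g S := by
  rw [smul_sum, sum_comm' (t' := U.powersetCard d)
    (s' := fun S => (U.powersetCard k).filter (S ⊆ ·))]
  · refine sum_congr rfl fun S hS => ?_
    obtain ⟨hSU, hSd⟩ := mem_powersetCard.mp hS
    rw [sum_const, card_filter_powersetCard_subset S U k hSU (hSd ▸ hdk), hSd]
  · intro R S
    simp only [mem_powersetCard, mem_filter]
    constructor
    · rintro ⟨⟨hRU, hRk⟩, hSR, hSd⟩
      exact ⟨⟨⟨hRU, hRk⟩, hSR⟩, hSR.trans hRU, hSd⟩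
    · rintro ⟨⟨⟨hRU, hRk⟩, hSR⟩, -, hSd⟩
      exact ⟨⟨hRU, hRk⟩, hSR, hSd⟩

theorem sum_powersetCard_eq_zero_of_le_card [IsAddTorsionFree M] {d k : ℕ} (hdk : d ≤ k)
    {g : Finset α → M} (hg : ∀ R : Finset α, #R = k → ∑ S ∈ R.powersetCard d, g S = 0)
    {U : Finset α} (hU : k ≤ #U) :
    ∑ S ∈ U.powersetCard d, g S = 0 := by
  have hsum := sum_powersetCard_sum_powersetCard hdk U g
  rw [sum_eq_zero fun R hR => hg R (mem_powersetCard.mp hR).2, eq_comm] at hsum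
  exact (nsmul_eq_zero_iff_right (Nat.choose_pos (by omega)).ne').mp hsum

end AddCommMonoid

section AddCommGroup

variable [AddCommGroup M]

theorem sum_powerset_neg_one_pow_card_smul_ite_disjoint (S T : Finset α) (x : M) :
    ∑ V ∈ T.powerset, (-1 : ℤ) ^ #V • (if Disjoint S V then x else 0) =
      if T ⊆ S then x else 0 := by
  simp_rw [smul_ite, smul_zero]
  rw [← sum_filter, ← sum_smul]
  have hfilter : T.powerset.filter (Disjoint S ·) = (T \ S).powerset := by
    ext V
    simp [subset_sdiff, disjoint_comm]
  simp only [hfilter, sum_powerset_neg_one_pow_card, sdiff_eq_empty_iff_subset, ite_smul,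
    one_smul, zero_smul]

theorem sum_powerset_neg_one_pow_card_smul_sum_powersetCard_compl [Fintype α] {d : ℕ}
    (g : Finset α → M) {T : Finset α} (hT : #T = d) :
    ∑ V ∈ T.powerset, (-1 : ℤ) ^ #V • ∑ S ∈ Vᶜ.powersetCard d, g S = g T := by
  have hcompl (V : Finset α) : ∑ S ∈ Vᶜ.powersetCard d, g S =
      ∑ S ∈ univ.powersetCard d, if Disjoint S V then g S else 0 := by
    rw [← sum_filter]
    congr 1
    ext S
    simp [subset_compl_iff_disjoint_right, and_comm]
  simp_rw [hcompl, smul_sum]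
  rw [sum_comm]
  simp_rw [sum_powerset_neg_one_pow_card_smul_ite_disjoint]
  rw [sum_eq_single_of_mem T (mem_powersetCard.2 ⟨subset_univ T, hT⟩), if_pos subset_rfl]
  intro S hS hST
  have hSd := (mem_powersetCard.mp hS).2
  exact if_neg fun hTS => hST (eq_of_subset_of_card_le hTS (by omega)).symm

theorem eq_zero_of_sum_powersetCard_eq_zero [Fintype α] [IsAddTorsionFree M] {d k : ℕ}
    (hdk : d ≤ k) (hkn : k + d ≤ Fintype.card α) {g : Finset α → M}
    (hg : ∀ R : Finset α, #R = k → ∑ S ∈ R.powersetCard d, g S = 0) {T : Finset α}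
    (hT : #T = d) : g T = 0 := by
  rw [← sum_powerset_neg_one_pow_card_smul_sum_powersetCard_compl g hT]
  refine sum_eq_zero fun V hV => ?_
  have hVd : #V ≤ d := hT ▸ card_le_card (mem_powerset.mp hV)
  rw [sum_powersetCard_eq_zero_of_le_card hdk hg (by rw [card_compl]; omega), smul_zero]

end AddCommGroup

theorem sum_filter_card_mul_prod_ite_mem [Fintype α] {R : Type*} [CommSemiring R] (d : ℕ)
    (c : Finset α → R) (U : Finset α) :
    ∑ S ∈ univ.filter (#· = d), c S * ∏ i ∈ S, (if i ∈ U then (1 : R) else 0) =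
      ∑ S ∈ U.powersetCard d, c S := by
  simp_rw [prod_boole, mul_ite, mul_one, mul_zero]
  rw [← sum_filter, filter_filter]
  congr 1
  ext S
  simp [mem_powersetCard, and_comm, subset_iff]

end Finset

theorem stmt17 (n k d : ℕ) (hdk : d ≤ k) (hn : k + d ≤ n)
    (c₁ c₂ : Finset (Fin n) → ℝ)
    (h : ∀ x : Fin n → Bool, wt x = k →
      ∑ S ∈ Finset.univ.filter (fun S : Finset (Fin n) => S.card = d),
        c₁ S * ∏ i ∈ S, (if x i = true then (1:ℝ) else 0)
      = ∑ S ∈ Finset.univ.filter (fun S : Finset (Fin n) => S.card = d),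
        c₂ S * ∏ i ∈ S, (if x i = true then (1:ℝ) else 0)) :
    ∀ S : Finset (Fin n), S.card = d → c₁ S = c₂ S := by
  intro T hT
  have hg (R : Finset (Fin n)) (hR : #R = k) : ∑ S ∈ R.powersetCard d, (c₁ - c₂) S = 0 := by
    have hx : wt (fun i => decide (i ∈ R)) = k := by simpa [wt] using hR
    have hcR := h _ hx
    simp only [decide_eq_true_eq, sum_filter_card_mul_prod_ite_mem] at hcR
    rw [Pi.sub_def, sum_sub_distrib, hcR, sub_self]
  exact sub_eq_zero.mp (eq_zero_of_sum_powersetCard_eq_zero hdk (by simpa using hn) hg hT)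
end
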